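/- arXiv:1407.8269 — 7 statements merged into one kernel-verified Lean document; each statement's English description precedes it below -/
import Mathlib

section
/- There exists a ballot profile with ⋂_{i∈N} A_i ≠ ∅ and a committee W of size k such that W provides justified representation for (A, k) but W ∩ ⋂_{i∈N} A_i = ∅. Concretely: candidates {a, b_1,...,b_k}, n = k+1 voters with A_i = {a, b_i} for i ≤ k and A_{k+1} = {a}; the committee W = {b_1,...,b_k} provides JR but does not contain the unanimously approved candidate a. -/
open Finset

def providesJR {α : Type*} [DecidableEq α] (n k : ℕ) (A : Fin n → Finset α)
    (W : Finset α) : Prop :=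
  ¬ ∃ (N : Finset (Fin n)) (c : α),
      n ≤ k * N.card ∧ (∀ i ∈ N, c ∈ A i) ∧ (∀ i ∈ N, A i ∩ W = ∅)

/-- JR does not imply unanimity.  Candidates are
`{a, b_1, …, b_k}` encoded as `Option (Fin k)` with `a = none` and
`b_i = some i`; there are `n = k + 1` voters with `A_i = {a, b_i}` for `i ≤ k`
and `A_{k+1} = {a}`.  The committee `W = {b_1, …, b_k}` has size `k`, provides
JR, yet avoids the unanimously approved candidate `a`. -/
theorem jr_not_implies_unanimity (k : ℕ) (hk : 0 < k) :
    ∃ (A : Fin (k + 1) → Finset (Option (Fin k))) (W : Finset (Option (Fin k))),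
      (∀ i : Fin (k + 1),
        A i = if h : (i : ℕ) < k then {none, some ⟨i, h⟩} else {none}) ∧
      W = (Finset.univ : Finset (Fin k)).image some ∧
      (∀ i, none ∈ A i) ∧
      W.card = k ∧
      providesJR (k + 1) k A W ∧
      none ∉ W := by
  set A : Fin (k + 1) → Finset (Option (Fin k)) :=
    fun i => if h : (i : ℕ) < k then {none, some ⟨i, h⟩} else {none} with hA
  set W : Finset (Option (Fin k)) := (Finset.univ : Finset (Fin k)).image some with hW
  refine ⟨A, W, fun i => rfl, rfl, ?_, ?_, ?_, ?_⟩
  · intro i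
    simp only [hA]
    split <;> simp
  · rw [hW, Finset.card_image_of_injective _ (Option.some_injective _), Finset.card_univ,
      Fintype.card_fin]
  · rintro ⟨N, c, hcard, hc, hdisj⟩
    -- N has at least 2 elements
    have hN2 : 2 ≤ N.card := by
      by_contra h
      push_neg at h
      interval_cases hc' : N.card <;> omega
    obtain ⟨i, hi, j, hj, hij⟩ := Finset.one_lt_card.mp hN2
    -- one of i, j has value < k
    have hik : (i : ℕ) < k ∨ (j : ℕ) < k := by
      by_contra h
      push_neg at h
      have : (i : ℕ) = k := by omega
      have : (j : ℕ) = k := by omega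
      exact hij (Fin.ext (by omega))
    rcases hik with h | h
    · have := hdisj i hi
      have hmem : some ⟨(i : ℕ), h⟩ ∈ A i ∩ W := by
        simp [hA, hW, h]
      rw [this] at hmem
      exact absurd hmem (Finset.notMem_empty _)
    · have := hdisj j hj
      have hmem : some ⟨(j : ℕ), h⟩ ∈ A j ∩ W := by
        simp [hA, hW, h]
      rw [this] at hmem
      exact absurd hmem (Finset.notMem_empty _)
  · simp [hW]
end

section
/- For every k ≥ 3 there is a ballot profile on which Approval Voting fails justified representation: with candidates {c_0, c_1, ..., c_k} and n = k voters where voter 1 approves only c_0 and voters 2,...,k each approve {c_1,...,c_k}, the unique AV winning committee is {c_1,...,c_k}, which does not provide JR. -/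
open Finset

/-- The AV score of a committee: the sum over its members of their approval
scores. -/
def avScore {α : Type*} [DecidableEq α] {n : ℕ} (A : Fin n → Finset α)
    (W : Finset α) : ℕ :=
  ∑ c ∈ W, (Finset.univ.filter (fun i => c ∈ A i)).card

/-- for every `k ≥ 3`, AV fails JR on the profile with candidates
`{c_0, c_1, …, c_k}` (encoded as `Fin (k+1)`, `c_0 = 0`) and `n = k` voters
where voter `1` approves only `c_0` and every other voter approves
`{c_1, …, c_k}`: the committee `{c_1, …, c_k}` is the unique AV winner among
size-`k` committees, yet it does not provide JR. -/
theorem av_fails_JR (k : ℕ) (hk : 3 ≤ k) :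
    ∀ A : Fin k → Finset (Fin (k + 1)),
      (A ⟨0, by omega⟩ = {0}) →
      (∀ i : Fin k, i ≠ ⟨0, by omega⟩ →
        A i = (Finset.univ : Finset (Fin (k + 1))).erase 0) →
      (∀ W : Finset (Fin (k + 1)), W.card = k →
          avScore A W ≤ avScore A ((Finset.univ : Finset (Fin (k + 1))).erase 0)) ∧
      (∀ W : Finset (Fin (k + 1)), W.card = k →
          avScore A W = avScore A ((Finset.univ : Finset (Fin (k + 1))).erase 0) →
          W = (Finset.univ : Finset (Fin (k + 1))).erase 0) ∧
      ¬ providesJR k k A ((Finset.univ : Finset (Fin (k + 1))).erase 0) := by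

  intro A h0 h1
  have hzero : (Finset.univ.filter (fun i : Fin k => (0 : Fin (k+1)) ∈ A i)).card = 1 := by
    have he : (Finset.univ.filter (fun i : Fin k => (0 : Fin (k+1)) ∈ A i))
        = {(⟨0, by omega⟩ : Fin k)} := by
      ext i
      simp only [mem_filter, mem_univ, true_and, mem_singleton]
      constructor
      · intro hi
        by_contra hne
        rw [h1 i hne] at hi
        simp at hi
      · intro hi; subst hi; rw [h0]; simp
    rw [he]; simp
  have hpos : ∀ c : Fin (k+1), c ≠ 0 →
      (Finset.univ.filter (fun i : Fin k => c ∈ A i)).card = k - 1 := by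
    intro c hc
    have he : (Finset.univ.filter (fun i : Fin k => c ∈ A i))
        = Finset.univ.erase (⟨0, by omega⟩ : Fin k) := by
      ext i
      simp only [mem_filter, mem_univ, true_and, mem_erase, and_true]
      constructor
      · intro hi hne; subst hne; rw [h0] at hi; exact hc (mem_singleton.mp hi)
      · intro hne; rw [h1 i hne]; simp [hc]
    rw [he, card_erase_of_mem (mem_univ _), card_univ, Fintype.card_fin]
  have hEscore : avScore A ((Finset.univ : Finset (Fin (k+1))).erase 0) = k * (k - 1) := by
    unfold avScore
    rw [Finset.sum_congr rfl (fun c hc => hpos c (mem_erase.mp hc).1), sum_const,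
      card_erase_of_mem (mem_univ _), card_univ, Fintype.card_fin, smul_eq_mul]
    simp
  have hW0 : ∀ W : Finset (Fin (k+1)), W.card = k → (0 : Fin (k+1)) ∈ W →
      avScore A W = 1 + (k - 1) * (k - 1) := by
    intro W hcard h0W
    unfold avScore
    rw [← Finset.add_sum_erase _ _ h0W, hzero]
    congr 1
    rw [Finset.sum_congr rfl (fun c hc => hpos c (mem_erase.mp hc).1), sum_const,
      card_erase_of_mem h0W, hcard, smul_eq_mul]
  have hWne : ∀ W : Finset (Fin (k+1)), W.card = k → (0 : Fin (k+1)) ∉ W →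
      W = (Finset.univ : Finset (Fin (k+1))).erase 0 := by
    intro W hcard h0W
    apply Finset.eq_of_subset_of_card_le
    · intro x hx; exact mem_erase.mpr ⟨fun h => h0W (h ▸ hx), mem_univ x⟩
    · rw [card_erase_of_mem (mem_univ _), card_univ, Fintype.card_fin, hcard]
      omega
  obtain ⟨m, rfl⟩ : ∃ m, k = m + 3 := ⟨k - 3, by omega⟩
  have hsub : m + 3 - 1 = m + 2 := by omega
  rw [hsub] at hEscore hpos hW0
  refine ⟨?_, ?_, ?_⟩
  · intro W hcard
    by_cases h0W : (0 : Fin (m+3+1)) ∈ W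
    · rw [hW0 W hcard h0W, hEscore]; nlinarith
    · rw [hWne W hcard h0W]
  · intro W hcard heq
    by_cases h0W : (0 : Fin (m+3+1)) ∈ W
    · rw [hW0 W hcard h0W, hEscore] at heq
      exfalso; nlinarith
    · exact hWne W hcard h0W
  · simp only [providesJR, not_not]
    refine ⟨{(⟨0, by omega⟩ : Fin (m+3))}, 0, ?_, ?_, ?_⟩
    · simp
    · intro i hi
      rw [mem_singleton.mp hi, h0]; simp
    · intro i hi
      rw [mem_singleton.mp hi, h0, Finset.singleton_inter_of_notMem (by simp)]
end

section
/- For every k ≥ 2, Satisfaction Approval Voting fails JR: with candidates X = {x_1,...,x_{k+1}}, Y = {y_1,...,y_k}, and k voters where A_1 = X, A_2 = {y_1, y_2}, and A_i = {y_i} for 3 ≤ i ≤ k, the committee Y uniquely maximizes SAV score (every committee intersecting X has strictly smaller SAV score), yet Y does not provide JR since voter 1 is unrepresented and n/k = 1. -/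
open Finset

/-- The SAV score of a committee `W`: each voter contributes the fraction of
her approved candidates that are in `W`. -/
def savScore {α : Type*} [DecidableEq α] {n : ℕ} (A : Fin n → Finset α)
    (W : Finset α) : ℚ :=
  ∑ i : Fin n, ((W ∩ A i).card : ℚ) / ((A i).card : ℚ)

lemma arith_key (k a b c : ℕ) (hk : 2 ≤ k) (ha : 1 ≤ a)
    (hc : c ≤ k - 2) (hsum : a + b + c = k) :
    (a:ℚ)/(k+1) + (b:ℚ)/2 + (c:ℚ) < (k:ℚ) - 1 := by
  have hk1 : (0:ℚ) < (k:ℚ) + 1 := by positivity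
  have hcq : (c:ℚ) = (k:ℚ) - a - b := by
    have : (a:ℚ) + b + c = k := by exact_mod_cast hsum
    linarith
  have hkq : (2:ℚ) ≤ k := by exact_mod_cast hk
  have key : (a:ℚ)/(k+1) < (a:ℚ) + (b:ℚ)/2 - 1 := by
    rw [div_lt_iff₀ hk1]
    rcases Nat.eq_zero_or_pos b with hb0 | hb1
    · have ha2 : 2 ≤ a := by omega
      have haq : (2:ℚ) ≤ a := by exact_mod_cast ha2
      have hbq : (b:ℚ) = 0 := by exact_mod_cast hb0
      nlinarith
    · have haq : (1:ℚ) ≤ a := by exact_mod_cast ha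
      have hbq : (1:ℚ) ≤ b := by exact_mod_cast hb1
      nlinarith
  linarith

/-- for every `k ≥ 2`, SAV fails JR.  Candidates are
`X = {x_1,…,x_{k+1}}` and `Y = {y_1,…,y_k}` (encoded as `Fin (k+1) ⊕ Fin k`);
there are `k` voters with `A_1 = X`, `A_2 = {y_1, y_2}` and `A_i = {y_i}` for
`3 ≤ i ≤ k`.  Every size-`k` committee intersecting `X` has strictly smaller
SAV score than `Y`, so `Y` is the unique SAV winner; yet `Y` fails JR since
voter `1` is unrepresented and `n/k = 1`. -/
theorem sav_fails_JR (k : ℕ) (hk : 2 ≤ k) :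
    ∀ A : Fin k → Finset (Fin (k + 1) ⊕ Fin k),
      (A ⟨0, by omega⟩ = (Finset.univ : Finset (Fin (k + 1))).image Sum.inl) →
      (A ⟨1, by omega⟩ = {Sum.inr ⟨0, by omega⟩, Sum.inr ⟨1, by omega⟩}) →
      (∀ i : Fin k, 2 ≤ (i : ℕ) → A i = {Sum.inr i}) →
      (∀ W : Finset (Fin (k + 1) ⊕ Fin k), W.card = k →
          (W ∩ (Finset.univ : Finset (Fin (k + 1))).image Sum.inl).Nonempty →
          savScore A W <
            savScore A ((Finset.univ : Finset (Fin k)).image Sum.inr)) ∧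
      ¬ providesJR k k A ((Finset.univ : Finset (Fin k)).image Sum.inr) := by
  intro A h0 h1 h2
  have hk0 : 0 < k := by omega
  have hk1 : 1 < k := by omega
  set X : Finset (Fin (k+1) ⊕ Fin k) := (Finset.univ : Finset (Fin (k+1))).image Sum.inl with hXdef
  set Y : Finset (Fin (k+1) ⊕ Fin k) := (Finset.univ : Finset (Fin k)).image Sum.inr with hYdef
  set i0 : Fin k := ⟨0, hk0⟩ with hi0def
  set i1 : Fin k := ⟨1, hk1⟩ with hi1def
  have hXY : X ∩ Y = ∅ := by
    ext x
    simp only [X, Y, mem_inter, mem_image, mem_univ, true_and, notMem_empty, iff_false]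
    rintro ⟨⟨a, rfl⟩, ⟨b, hb⟩⟩
    exact Sum.inr_ne_inl hb
  set S2 : Finset (Fin k) := Finset.univ.filter (fun i : Fin k => 2 ≤ (i:ℕ)) with hS2def
  have hi0S : i0 ∉ insert i1 S2 := by
    simp [S2, i0, i1, Fin.ext_iff]
  have hi1S : i1 ∉ S2 := by simp [S2, i1]
  have huniv : (Finset.univ : Finset (Fin k)) = insert i0 (insert i1 S2) := by
    ext i
    simp only [mem_univ, true_iff, mem_insert, S2, mem_filter, true_and, i0, i1,
      Fin.ext_iff, Fin.val_mk]
    omega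
  have hS2card : S2.card = k - 2 := by
    have := congrArg Finset.card huniv
    rw [card_univ, Fintype.card_fin, card_insert_of_notMem hi0S,
      card_insert_of_notMem hi1S] at this
    omega
  have hA0 : A i0 = X := h0
  have hA1 : A i1 = {Sum.inr i0, Sum.inr i1} := h1
  have hA0card : (A i0).card = k + 1 := by
    rw [hA0, hXdef, card_image_of_injective _ Sum.inl_injective, card_univ, Fintype.card_fin]
  have hA1card : (A i1).card = 2 := by
    rw [hA1]
    rw [card_insert_of_notMem (by simp [i0, i1, Fin.ext_iff]), card_singleton]
  have hA2 : ∀ i ∈ S2, A i = {Sum.inr i} := by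
    intro i hi
    exact h2 i (by simpa [S2] using hi)
  -- the score of Y
  have hYscore : savScore A Y = (k:ℚ) - 1 := by
    rw [savScore, huniv, sum_insert hi0S, sum_insert hi1S]
    have t0 : ((Y ∩ A i0).card : ℚ) / ((A i0).card : ℚ) = 0 := by
      rw [hA0, inter_comm, hXY]; simp
    have t1 : ((Y ∩ A i1).card : ℚ) / ((A i1).card : ℚ) = 1 := by
      have : Y ∩ A i1 = A i1 := by
        rw [inter_eq_right, hA1]
        intro x hx
        simp only [mem_insert, mem_singleton] at hx
        rcases hx with rfl | rfl <;> simp [Y]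
      rw [this, hA1card]; norm_num
    have t2 : ∀ i ∈ S2, ((Y ∩ A i).card : ℚ) / ((A i).card : ℚ) = 1 := by
      intro i hi
      rw [hA2 i hi]
      have : Y ∩ {Sum.inr i} = {Sum.inr i} := by
        rw [inter_eq_right, singleton_subset_iff]; simp [Y]
      rw [this]; simp
    rw [t0, t1, sum_congr rfl t2]
    simp only [sum_const, nsmul_eq_mul, mul_one, hS2card]
    have : ((k - 2 : ℕ) : ℚ) = (k:ℚ) - 2 := by
      have : (2:ℕ) ≤ k := hk
      push_cast [Nat.cast_sub this]
      ring
    rw [this]; ring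
  constructor
  · intro W hWcard hWne
    set a := (W ∩ X).card with hadef
    set b := (W ∩ A i1).card with hbdef
    set c := (W ∩ S2.image Sum.inr).card with hcdef
    have ha : 1 ≤ a := card_pos.mpr hWne
    -- sum over S2
    have hsumS2 : ∑ i ∈ S2, (W ∩ A i).card = c := by
      have e1 : ∀ i ∈ S2, (W ∩ A i).card = if Sum.inr i ∈ W then 1 else 0 := by
        intro i hi
        rw [hA2 i hi]
        by_cases h : Sum.inr i ∈ W
        · rw [inter_singleton_of_mem h, card_singleton, if_pos h]
        · rw [inter_singleton_of_notMem h, card_empty, if_neg h]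
      rw [sum_congr rfl e1, ← card_filter]
      have : W ∩ S2.image Sum.inr = (S2.filter (fun i => Sum.inr i ∈ W)).image Sum.inr := by
        ext x
        simp only [mem_inter, mem_image, mem_filter]
        constructor
        · rintro ⟨hxW, i, hi, rfl⟩
          exact ⟨i, ⟨hi, hxW⟩, rfl⟩
        · rintro ⟨i, ⟨hi, hiW⟩, rfl⟩
          exact ⟨hiW, i, hi, rfl⟩
      rw [hcdef, this, card_image_of_injective _ Sum.inr_injective]
    have hc : c ≤ k - 2 := by
      calc c ≤ (S2.image Sum.inr).card := card_le_card inter_subset_right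
        _ = S2.card := card_image_of_injective _ Sum.inr_injective
        _ = k - 2 := hS2card
    -- a + b + c = k
    have hsum : a + b + c = k := by
      have hYsplit : Y = A i1 ∪ S2.image Sum.inr := by
        rw [hYdef, huniv, hA1]
        ext x
        simp only [mem_image, mem_insert, mem_union, mem_singleton]
        constructor
        · rintro ⟨i, hi, rfl⟩
          rcases hi with rfl | rfl | hi
          · exact Or.inl (Or.inl rfl)
          · exact Or.inl (Or.inr rfl)
          · exact Or.inr ⟨i, hi, rfl⟩
        · rintro (h | ⟨i, hi, rfl⟩)
          · rcases h with rfl | rfl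
            · exact ⟨i0, by simp, rfl⟩
            · exact ⟨i1, by simp, rfl⟩
          · exact ⟨i, by simp [hi], rfl⟩
      have hdisj1 : Disjoint (W ∩ A i1) (W ∩ S2.image Sum.inr) := by
        rw [disjoint_left]
        intro x hx1 hx2
        rw [mem_inter] at hx1 hx2
        obtain ⟨-, hx1⟩ := hx1
        obtain ⟨-, hx2⟩ := hx2
        rw [hA1] at hx1
        simp only [mem_insert, mem_singleton] at hx1
        simp only [mem_image] at hx2
        obtain ⟨i, hi, rfl⟩ := hx2
        have hi2 : 2 ≤ (i:ℕ) := by simpa [S2] using hi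
        rcases hx1 with h | h <;>
          · have := Sum.inr_injective h.symm
            rw [Fin.ext_iff] at this
            simp [i0, i1] at this
            omega
      have hWY : (W ∩ Y).card = b + c := by
        rw [hYsplit, inter_union_distrib_left, card_union_of_disjoint hdisj1]
      have hdisj2 : Disjoint (W ∩ X) (W ∩ Y) := by
        rw [disjoint_left]
        intro x hx1 hx2
        rw [mem_inter] at hx1 hx2
        have : x ∈ X ∩ Y := mem_inter.mpr ⟨hx1.2, hx2.2⟩
        rw [hXY] at this
        exact notMem_empty x this
      have hWsplit : W = (W ∩ X) ∪ (W ∩ Y) := by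
        rw [← inter_union_distrib_left]
        have : X ∪ Y = Finset.univ := by
          ext x
          rcases x with x | x <;> simp [X, Y]
        rw [this, inter_univ]
      have := congrArg Finset.card hWsplit
      rw [card_union_of_disjoint hdisj2, hWcard, hWY] at this
      omega
    -- compute savScore A W
    have hWscore : savScore A W = (a:ℚ)/(k+1) + (b:ℚ)/2 + (c:ℚ) := by
      rw [savScore, huniv, sum_insert hi0S, sum_insert hi1S]
      have t0 : ((W ∩ A i0).card : ℚ) / ((A i0).card : ℚ) = (a:ℚ)/(k+1) := by
        rw [hA0card, hA0, ← hadef]; push_cast; ring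
      have t1 : ((W ∩ A i1).card : ℚ) / ((A i1).card : ℚ) = (b:ℚ)/2 := by
        rw [hA1card, ← hbdef]; norm_num
      have t2 : ∑ i ∈ S2, ((W ∩ A i).card : ℚ) / ((A i).card : ℚ)
          = ∑ i ∈ S2, ((W ∩ A i).card : ℚ) := by
        apply sum_congr rfl
        intro i hi
        rw [hA2 i hi]
        simp
      rw [t0, t1, t2, ← Nat.cast_sum, hsumS2]
      ring
    rw [hWscore, hYscore]
    exact arith_key k a b c hk ha hc hsum
  · intro hJR
    apply hJR
    refine ⟨{i0}, Sum.inl ⟨0, by omega⟩, by simpa using hk0, ?_, ?_⟩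
    · intro i hi
      have hii : i = i0 := mem_singleton.mp hi
      simp only [hii, hA0, X]
      exact mem_image_of_mem _ (mem_univ _)
    · intro i hi
      have hii : i = i0 := mem_singleton.mp hi
      simp only [hii, hA0]
      exact hXY
end

section
/- For every k ≥ 2, Minimax Approval Voting fails JR: with candidates X = {x_1,...,x_k}, Y = {y_1,...,y_k}, {z}, and 2k voters where A_i = {x_i, y_i} for i ≤ k and A_i = {z} for i > k, the MAV score of X is k+1 while every size-k committee containing z has MAV score at least k+2; hence no MAV-optimal committee contains z, violating JR (the k voters approving z form a group of size k ≥ n/k = 2). -/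
open Finset

/-- Hamming distance between two finite sets. -/
def hamming {α : Type*} [DecidableEq α] (Q T : Finset α) : ℕ :=
  (Q \ T).card + (T \ Q).card

/-- The MAV score of a committee: the maximum Hamming distance to a ballot. -/
def mavScore {α : Type*} [DecidableEq α] {n : ℕ} (A : Fin n → Finset α)
    (W : Finset α) : ℕ :=
  Finset.univ.sup (fun i : Fin n => hamming W (A i))

/-- for every `k ≥ 2`, MAV fails JR.  Candidates are
`X ∪ Y ∪ {z}` encoded as `Fin k × Fin 2 ⊕ Unit` with `x_i = inl (i,0)`,
`y_i = inl (i,1)`, `z = inr ()`; the `2k` voters have `A_i = {x_i, y_i}` for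
`i ≤ k` and `A_i = {z}` for `i > k`.  The MAV score of `X` is `k + 1`, every
size-`k` committee containing `z` has MAV score at least `k + 2`, hence every
MAV-optimal size-`k` committee omits `z` and fails JR. -/
theorem mav_fails_JR (k : ℕ) (hk : 2 ≤ k) :
    ∀ A : Fin (2 * k) → Finset (Fin k × Fin 2 ⊕ Unit),
      (∀ i : Fin (2 * k), (h : (i : ℕ) < k) →
        A i = {Sum.inl (⟨i, h⟩, 0), Sum.inl (⟨i, h⟩, 1)}) →
      (∀ i : Fin (2 * k), k ≤ (i : ℕ) → A i = {Sum.inr ()}) →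
      mavScore A ((Finset.univ : Finset (Fin k)).image (fun i => Sum.inl (i, 0)))
        = k + 1 ∧
      (∀ W : Finset (Fin k × Fin 2 ⊕ Unit), W.card = k → Sum.inr () ∈ W →
          k + 2 ≤ mavScore A W) ∧
      (∀ W : Finset (Fin k × Fin 2 ⊕ Unit), W.card = k →
          (∀ W' : Finset (Fin k × Fin 2 ⊕ Unit), W'.card = k →
            mavScore A W ≤ mavScore A W') →
          Sum.inr () ∉ W ∧ ¬ providesJR (2 * k) k A W) := by
  intro A hA1 hA2
  classical
  set X : Finset (Fin k × Fin 2 ⊕ Unit) :=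
    (Finset.univ : Finset (Fin k)).image (fun i => Sum.inl (i, 0)) with hXdef
  have hmem0 : ∀ (j : Fin k) (b : Fin 2), Sum.inl (j, b) ∈ X ↔ b = 0 := by
    intro j b
    simp only [hXdef, mem_image, mem_univ, true_and, Sum.inl.injEq, Prod.mk.injEq]
    constructor
    · rintro ⟨i, rfl, rfl⟩; rfl
    · rintro rfl; exact ⟨j, rfl, rfl⟩
  have hzX : (Sum.inr () : Fin k × Fin 2 ⊕ Unit) ∉ X := by
    simp [hXdef]
  have hXcard : X.card = k := by
    rw [hXdef, Finset.card_image_of_injective _ (fun a b h => by simpa using h)]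
    simp
  -- per-voter distance to X, voters i < k
  have hXi : ∀ i : Fin (2 * k), (h : (i : ℕ) < k) → hamming X (A i) = k := by
    intro i h
    rw [hA1 i h]
    have h1 : X \ {Sum.inl (⟨i, h⟩, 0), Sum.inl (⟨i, h⟩, 1)}
        = X.erase (Sum.inl (⟨i, h⟩, (0 : Fin 2))) := by
      ext a
      simp only [mem_sdiff, mem_insert, mem_singleton, mem_erase]
      constructor
      · rintro ⟨ha, h2⟩; exact ⟨fun hc => h2 (Or.inl hc), ha⟩
      · rintro ⟨h2, ha⟩
        refine ⟨ha, ?_⟩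
        rintro (rfl | rfl)
        · exact h2 rfl
        · have := (hmem0 _ _).1 ha
          exact absurd this (by decide)
    have h2 : ({Sum.inl (⟨i, h⟩, 0), Sum.inl (⟨i, h⟩, 1)} :
        Finset (Fin k × Fin 2 ⊕ Unit)) \ X = {Sum.inl (⟨i, h⟩, (1 : Fin 2))} := by
      ext a
      simp only [mem_sdiff, mem_insert, mem_singleton]
      constructor
      · rintro ⟨rfl | rfl, ha⟩
        · exact absurd ((hmem0 _ _).2 rfl) ha
        · rfl
      · rintro rfl
        refine ⟨Or.inr rfl, fun ha => ?_⟩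
        have := (hmem0 _ _).1 ha
        exact absurd this (by decide)
    rw [hamming, h1, h2, card_erase_of_mem ((hmem0 _ _).2 rfl), hXcard, card_singleton]
    omega
  -- per-voter distance to X, voters i ≥ k
  have hXz : ∀ i : Fin (2 * k), k ≤ (i : ℕ) → hamming X (A i) = k + 1 := by
    intro i h
    rw [hA2 i h, hamming]
    have h1 : X \ ({Sum.inr ()} : Finset (Fin k × Fin 2 ⊕ Unit)) = X := by
      apply Finset.sdiff_eq_self_iff_disjoint.2
      simp [hzX]
    have h2 : ({Sum.inr ()} : Finset (Fin k × Fin 2 ⊕ Unit)) \ X = {Sum.inr ()} := by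
      apply Finset.sdiff_eq_self_iff_disjoint.2
      simp [hzX]
    rw [h1, h2, hXcard, card_singleton]
  have hscoreX : mavScore A X = k + 1 := by
    apply le_antisymm
    · apply Finset.sup_le
      intro i _
      by_cases h : (i : ℕ) < k
      · rw [hXi i h]; omega
      · rw [hXz i (le_of_not_gt h)]
    · have hk2 : k < 2 * k := by omega
      calc k + 1 = hamming X (A ⟨k, hk2⟩) := (hXz ⟨k, hk2⟩ le_rfl).symm
        _ ≤ mavScore A X := Finset.le_sup (f := fun i : Fin (2 * k) => hamming X (A i)) (Finset.mem_univ (⟨k, hk2⟩ : Fin (2 * k)))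
  have part2 : ∀ W : Finset (Fin k × Fin 2 ⊕ Unit), W.card = k → Sum.inr () ∈ W →
      k + 2 ≤ mavScore A W := by
    intro W hW hzW
    have hcard : (W.erase (Sum.inr ())).card = k - 1 := by
      rw [card_erase_of_mem hzW, hW]
    have hk0 : 0 < k := by omega
    set g : (Fin k × Fin 2 ⊕ Unit) → Fin k :=
      Sum.elim Prod.fst (fun _ => ⟨0, hk0⟩) with hg
    have himg : ((W.erase (Sum.inr ())).image g).card < (Finset.univ : Finset (Fin k)).card := by
      calc ((W.erase (Sum.inr ())).image g).card ≤ (W.erase (Sum.inr ())).card :=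
            card_image_le
        _ = k - 1 := hcard
        _ < (Finset.univ : Finset (Fin k)).card := by
            rw [card_fin]; omega
    have hnsub : ¬ (Finset.univ : Finset (Fin k)) ⊆ (W.erase (Sum.inr ())).image g :=
      fun hsub => absurd (Finset.card_le_card hsub) (not_le.2 himg)
    obtain ⟨i, -, hi⟩ := Finset.not_subset.1 hnsub
    have hik : (i : ℕ) < k := i.isLt
    have hj2 : (i : ℕ) < 2 * k := by omega
    have hdisj : Disjoint (A ⟨(i : ℕ), hj2⟩) W := by
      rw [hA1 ⟨(i : ℕ), hj2⟩ hik, Finset.disjoint_left]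
      intro a ha haW
      apply hi
      have hmk : (⟨(i : ℕ), hik⟩ : Fin k) = i := Fin.ext rfl
      rcases mem_insert.1 ha with rfl | ha
      · exact mem_image.2 ⟨_, mem_erase.2 ⟨by simp, haW⟩, by simp [hg, hmk]⟩
      · rw [mem_singleton] at ha; subst ha
        exact mem_image.2 ⟨_, mem_erase.2 ⟨by simp, haW⟩, by simp [hg, hmk]⟩
    have hcardA : (A ⟨(i : ℕ), hj2⟩).card = 2 := by
      rw [hA1 ⟨(i : ℕ), hj2⟩ hik, card_insert_of_notMem (by simp), card_singleton]
    have hham : hamming W (A ⟨(i : ℕ), hj2⟩) = k + 2 := by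
      rw [hamming, Finset.sdiff_eq_self_iff_disjoint.2 hdisj.symm,
        Finset.sdiff_eq_self_iff_disjoint.2 hdisj, hW, hcardA]
    calc k + 2 = hamming W (A ⟨(i : ℕ), hj2⟩) := hham.symm
      _ ≤ mavScore A W := Finset.le_sup (f := fun j : Fin (2 * k) => hamming W (A j)) (Finset.mem_univ (⟨(i : ℕ), hj2⟩ : Fin (2 * k)))
  refine ⟨hscoreX, part2, ?_⟩
  intro W hW hopt
  have hle : mavScore A W ≤ k + 1 := by
    have := hopt X hXcard
    rwa [hscoreX] at this
  have hzW : Sum.inr () ∉ W := by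
    intro h
    have := part2 W hW h
    omega
  refine ⟨hzW, ?_⟩
  intro hJR
  apply hJR
  have hinj : Function.Injective
      (fun j : Fin k => (⟨k + (j : ℕ), by have := j.isLt; omega⟩ : Fin (2 * k))) := by
    intro a b h
    have h' := congrArg Fin.val h
    simp only at h'
    exact Fin.ext (by omega)
  refine ⟨(Finset.univ : Finset (Fin k)).image
      (fun j : Fin k => (⟨k + (j : ℕ), by have := j.isLt; omega⟩ : Fin (2 * k))), Sum.inr (), ?_, ?_, ?_⟩
  · rw [Finset.card_image_of_injective _ hinj, Finset.card_fin]
    nlinarith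
  · intro i hiN
    rcases mem_image.1 hiN with ⟨j, -, rfl⟩
    rw [hA2 _ (Nat.le_add_right k j)]
    exact mem_singleton_self _
  · intro i hiN
    rcases mem_image.1 hiN with ⟨j, -, rfl⟩
    rw [hA2 _ (Nat.le_add_right k j)]
    exact singleton_inter_of_notMem hzW
end

section
/- If every voter approves exactly k candidates, then: (1) if there exists a size-k committee W with W ∩ A_i ≠ ∅ for all i, then every MAV-optimal committee intersects every ballot, and any such committee provides JR; (2) if no size-k committee intersects all ballots, then every size-k committee has MAV score exactly 2k. -/
open Finset

/-!
Between two `k`-sets the Hamming distance is `2 (k - |Q ∩ T|)`, so it is at most `2k`, with equality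
exactly for disjoint sets. Hence the MAV score of a committee is `2k` if it misses some ballot and
below `2k` if it meets all of them. If some committee meets every ballot, an optimal committee
scores below `2k` and so meets every ballot too, which gives JR; otherwise every committee
scores `2k`.
-/

section Hamming

variable {α : Type*} [DecidableEq α] {Q T : Finset α} {k : ℕ}

lemma hamming_eq_two_mul_sub (hQ : #Q = k) (hT : #T = k) :
    hamming Q T = 2 * (k - #(Q ∩ T)) := by
  have hQ' : #(Q ∩ T) + #(Q \ T) = k := by rw [card_inter_add_card_sdiff, hQ]
  have hT' : #(Q ∩ T) + #(T \ Q) = k := by rw [inter_comm, card_inter_add_card_sdiff, hT]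
  unfold hamming
  omega

lemma hamming_le_two_mul (hQ : #Q = k) (hT : #T = k) : hamming Q T ≤ 2 * k := by
  rw [hamming_eq_two_mul_sub hQ hT]
  omega

lemma hamming_lt_two_mul_iff (hQ : #Q = k) (hT : #T = k) :
    hamming Q T < 2 * k ↔ (Q ∩ T).Nonempty := by
  have hle : #(Q ∩ T) ≤ k := hQ ▸ card_le_card inter_subset_left
  rw [hamming_eq_two_mul_sub hQ hT, ← card_pos]
  omega

end Hamming

section MAV

variable {α : Type*} [DecidableEq α] {n k : ℕ} {A : Fin n → Finset α} {W : Finset α}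

lemma mavScore_le_two_mul (hA : ∀ i, #(A i) = k) (hW : #W = k) : mavScore A W ≤ 2 * k :=
  Finset.sup_le fun i _ => hamming_le_two_mul hW (hA i)

lemma mavScore_lt_two_mul_iff (hn : 0 < n) (hA : ∀ i, #(A i) = k) (hW : #W = k) :
    mavScore A W < 2 * k ↔ ∀ i, (W ∩ A i).Nonempty := by
  constructor
  · intro hlt i
    exact (hamming_lt_two_mul_iff hW (hA i)).1 <|
      (Finset.le_sup (f := fun j => hamming W (A j)) (mem_univ i)).trans_lt hlt
  · intro hmeets
    have hk : 0 < k := hW ▸ card_pos.2 ((hmeets ⟨0, hn⟩).mono inter_subset_left)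
    refine (Finset.sup_lt_iff (by simpa using hk)).2 fun i _ => ?_
    exact (hamming_lt_two_mul_iff hW (hA i)).2 (hmeets i)

lemma mavScore_eq_two_mul_iff (hn : 0 < n) (hA : ∀ i, #(A i) = k) (hW : #W = k) :
    mavScore A W = 2 * k ↔ ∃ i, W ∩ A i = ∅ := by
  simp_rw [← not_nonempty_iff_eq_empty, ← not_forall, ← mavScore_lt_two_mul_iff hn hA hW]
  exact ⟨fun h => h.not_lt, fun h => (mavScore_le_two_mul hA hW).antisymm (not_lt.1 h)⟩

end MAV

lemma providesJR_of_forall_inter_nonempty {α : Type*} [DecidableEq α] {n k : ℕ}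
    {A : Fin n → Finset α} {W : Finset α} (hn : 0 < n) (hmeets : ∀ i, (W ∩ A i).Nonempty) :
    providesJR n k A W := by
  rintro ⟨N, -, hcard, -, hmissed⟩
  obtain rfl | ⟨i, hi⟩ := N.eq_empty_or_nonempty
  · simp at hcard
    omega
  · exact (hmeets i).ne_empty (inter_comm W (A i) ▸ hmissed i hi)

theorem mav_JR_restricted_general {α : Type*} [DecidableEq α]
    (n k : ℕ) (hn : 0 < n)
    (A : Fin n → Finset α) (hA : ∀ i, (A i).card = k) :
    ((∃ W₀ : Finset α, W₀.card = k ∧ ∀ i, (W₀ ∩ A i).Nonempty) →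
      ∀ W : Finset α, W.card = k →
        (∀ W' : Finset α, W'.card = k → mavScore A W ≤ mavScore A W') →
        (∀ i, (W ∩ A i).Nonempty) ∧ providesJR n k A W) ∧
    ((¬ ∃ W₀ : Finset α, W₀.card = k ∧ ∀ i, (W₀ ∩ A i).Nonempty) →
      ∀ W : Finset α, W.card = k → mavScore A W = 2 * k) := by
  constructor
  · rintro ⟨W₀, hW₀, hmeets₀⟩ W hW hopt
    have hmeets : ∀ i, (W ∩ A i).Nonempty :=
      (mavScore_lt_two_mul_iff hn hA hW).1 <|
        (hopt W₀ hW₀).trans_lt ((mavScore_lt_two_mul_iff hn hA hW₀).2 hmeets₀)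
    exact ⟨hmeets, providesJR_of_forall_inter_nonempty hn hmeets⟩
  · intro hnone W hW
    push Not at hnone
    exact (mavScore_eq_two_mul_iff hn hA hW).2 (hnone W hW)

/-- if every voter approves exactly `k` candidates, then
(1) if some size-`k` committee intersects every ballot, then every MAV-optimal
size-`k` committee intersects every ballot and provides JR; and
(2) if no size-`k` committee intersects all ballots, then every size-`k`
committee has MAV score exactly `2k`. -/
theorem mav_JR_restricted {α : Type*} [DecidableEq α] [Fintype α]
    (n k : ℕ) (hn : 0 < n) (hk : 0 < k) (hkcard : k ≤ Fintype.card α)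
    (A : Fin n → Finset α) (hA : ∀ i, (A i).card = k) :
    ((∃ W₀ : Finset α, W₀.card = k ∧ ∀ i, (W₀ ∩ A i).Nonempty) →
      ∀ W : Finset α, W.card = k →
        (∀ W' : Finset α, W'.card = k → mavScore A W ≤ mavScore A W') →
        (∀ i, (W ∩ A i).Nonempty) ∧ providesJR n k A W) ∧
    ((¬ ∃ W₀ : Finset α, W₀.card = k ∧ ∀ i, (W₀ ∩ A i).Nonempty) →
      ∀ W : Finset α, W.card = k → mavScore A W = 2 * k) :=
  mav_JR_restricted_general n k hn A hA
end

section
/- For any weight vector w with w_1 = 1 ≥ w_2 ≥ ... ≥ 0, if w_j > 1/j for some j > 1, then w-PAV fails JR: there exist k, and a ballot profile on which the unique w-PAV-optimal committee fails justified representation. Concretely, with j | k, k > ⌈1/(εj)⌉ + 1 where w_j = 1/j + ε, candidates {c} ∪ C_1 ∪ ... ∪ C_t (t = k/j, |C_i| = j, pairwise disjoint), k voters approving only {c}, and j(k−1) voters approving C_i for each i, the committee C \ {c} has strictly higher w-PAV score than any committee containing c, yet JR requires electing c. -/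
open Finset

def wpavScore {α : Type*} [DecidableEq α] (w : ℕ → ℚ) {n : ℕ}
    (A : Fin n → Finset α) (W : Finset α) : ℚ :=
  ∑ i : Fin n, ∑ j ∈ Finset.Icc 1 ((W ∩ A i).card), w j

def grp (j g : ℕ) : Finset ℕ := (Finset.range j).image (fun m => g*j+m+1)

def ballots (j t k : ℕ) : Fin (k*k) → Finset ℕ :=
  fun i => if (i:ℕ) < k then {0} else grp j (((i:ℕ) - k) / (j*(k-1)))

lemma grp_card {j : ℕ} (g : ℕ) : (grp j g).card = j := by
  rw [grp, Finset.card_image_of_injective _ (fun a b h => by omega), Finset.card_range]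

lemma mem_grp {j g x : ℕ} : x ∈ grp j g ↔ ∃ m < j, x = g*j+m+1 := by
  simp [grp, eq_comm]

lemma zero_notMem_grp {j g : ℕ} : 0 ∉ grp j g := by
  simp [mem_grp]

lemma grp_subset {j t k g : ℕ} (hk : k = j * t) (hg : g < t) :
    grp j g ⊆ Finset.range (k+1) := by
  intro x hx
  rw [mem_grp] at hx
  obtain ⟨m, hm, rfl⟩ := hx
  have h1 : g*j + m + 1 ≤ t*j := by
    have : (g+1)*j ≤ t*j := Nat.mul_le_mul_right _ hg
    nlinarith
  have h2 : t*j = j*t := mul_comm _ _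
  simp only [Finset.mem_range]
  omega

lemma sum_range_mul_div (b t : ℕ) (G : ℕ → ℚ) :
    ∑ q ∈ Finset.range (t * b), G (q / b) = ∑ g ∈ Finset.range t, (b : ℚ) * G g := by
  induction t with
  | zero => simp
  | succ t ih =>
    rw [Finset.sum_range_succ, ← ih,
      show (t+1)*b = t*b + b by ring, Finset.range_eq_Ico,
      ← Finset.sum_Ico_consecutive (fun q => G (q/b)) (Nat.zero_le (t*b)) (Nat.le_add_right (t*b) b),
      ← Finset.range_eq_Ico]
    congr 1
    have : ∀ q ∈ Finset.Ico (t*b) (t*b+b), G (q/b) = G t := by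
      intro q hq
      simp only [Finset.mem_Ico] at hq
      rw [Nat.div_eq_of_lt_le hq.1 (lt_of_lt_of_le hq.2 (le_of_eq (by ring)))]
    rw [Finset.sum_congr rfl this, Finset.sum_const, Nat.card_Ico]
    simp [nsmul_eq_mul]

lemma score_formula (w : ℕ → ℚ) (j t k : ℕ) (hj : 2 ≤ j) (ht : 1 ≤ t)
    (hk : k = j * t) (W' : Finset ℕ) :
    wpavScore w (ballots j t k) W'
    = (k : ℚ) * (∑ m ∈ Finset.Icc 1 ((W' ∩ {0}).card), w m)
      + ∑ g ∈ Finset.range t, ((j*(k-1) : ℕ) : ℚ) *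
          (∑ m ∈ Finset.Icc 1 ((W' ∩ grp j g).card), w m) := by
  have hk2 : 2 ≤ k := by nlinarith
  unfold wpavScore ballots
  rw [Fin.sum_univ_eq_sum_range
    (fun i => ∑ m ∈ Finset.Icc 1 ((W' ∩ (if i < k then ({0} : Finset ℕ) else grp j ((i - k) / (j*(k-1))))).card), w m) (k*k)]
  rw [Finset.range_eq_Ico,
    ← Finset.sum_Ico_consecutive _ (Nat.zero_le k) (by nlinarith : k ≤ k*k),
    ← Finset.range_eq_Ico]
  congr 1
  · rw [Finset.sum_congr rfl (fun i hi => by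
      rw [if_pos (Finset.mem_range.mp hi)]),
      Finset.sum_const, Finset.card_range, nsmul_eq_mul]
  · rw [Finset.sum_Ico_eq_sum_range]
    have hrw : ∀ i : ℕ, (if k + i < k then ({0} : Finset ℕ) else grp j ((k + i - k) / (j*(k-1))))
        = grp j (i / (j*(k-1))) := by
      intro i
      rw [if_neg (by omega)]
      congr 2
      omega
    have hcnt : k*k - k = t * (j*(k-1)) := by
      have h1 : t * (j*(k-1)) = (j*t)*(k-1) := by ring
      rw [h1, ← hk, Nat.mul_sub, mul_comm]
      omega
    calc ∑ i ∈ Finset.range (k*k - k),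
          ∑ m ∈ Finset.Icc 1 ((W' ∩ (if k + i < k then ({0} : Finset ℕ) else grp j ((k + i - k) / (j*(k-1))))).card), w m
        = ∑ i ∈ Finset.range (t * (j*(k-1))),
          ∑ m ∈ Finset.Icc 1 ((W' ∩ grp j (i / (j*(k-1)))).card), w m := by
          rw [hcnt]; exact Finset.sum_congr rfl (fun i _ => by rw [hrw])
      _ = _ := sum_range_mul_div (j*(k-1)) t (fun g => ∑ m ∈ Finset.Icc 1 ((W' ∩ grp j g).card), w m)

/-- for any weight vector `w` (with `w 1 = 1`, nonincreasing and
nonnegative), if `w j > 1/j` for some `j > 1`, then `w`-PAV fails JR: there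
are a committee size `k` and a ballot profile on which the unique
`w`-PAV-optimal size-`k` committee fails justified representation. -/
theorem wpav_large_weight_fails_JR (w : ℕ → ℚ) (hw1 : w 1 = 1)
    (hmono : ∀ j, 1 ≤ j → w (j + 1) ≤ w j)
    (hnonneg : ∀ j, 1 ≤ j → 0 ≤ w j)
    (j : ℕ) (hj : 1 < j) (hwj : 1 / (j : ℚ) < w j) :
    ∃ (k n : ℕ) (A : Fin n → Finset ℕ) (C : Finset ℕ) (W : Finset ℕ),
      0 < k ∧ (∀ i, A i ⊆ C) ∧ k ≤ C.card ∧
      W ⊆ C ∧ W.card = k ∧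
      (∀ W' : Finset ℕ, W' ⊆ C → W'.card = k → W' ≠ W →
        wpavScore w A W' < wpavScore w A W) ∧
      ¬ providesJR n k A W := by
  have hj2 : 2 ≤ j := hj
  have hjQ : (0:ℚ) < j := by positivity
  have hδ : 0 < (j:ℚ) * w j - 1 := by
    have := (div_lt_iff₀ hjQ).mp hwj
    linarith [this]
  set δ : ℚ := (j:ℚ) * w j - 1 with hδdef
  obtain ⟨T, hT⟩ := exists_nat_gt (1/δ)
  set t : ℕ := T + 1 with htdef
  set k : ℕ := j * t with hkdef
  have ht1 : 1 ≤ t := by omega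
  have hk2 : 2 ≤ k := by
    have := Nat.mul_le_mul hj2 ht1
    simpa [hkdef] using this
  have hk2T : 2 * T + 2 ≤ k := by
    have h := Nat.mul_le_mul_right t hj2
    omega
  -- key numeric inequality
  have hknum : (k:ℚ) < (j:ℚ) * ((k:ℚ) - 1) * w j := by
    have h1 : 1/δ < (k:ℚ) - 1 := by
      have hnat : T + 2 ≤ k := by omega
      have hc := (Nat.cast_le (α := ℚ)).mpr hnat
      push_cast at hc
      linarith
    have h2 : 1 < ((k:ℚ) - 1) * δ := by
      rw [div_lt_iff₀ hδ] at h1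
      linarith
    have expand : ((k:ℚ) - 1) * δ = (j:ℚ) * ((k:ℚ)-1) * w j - ((k:ℚ) - 1) := by
      rw [hδdef]; ring
    linarith [expand ▸ h2]
  set C : Finset ℕ := Finset.range (k+1) with hCdef
  set W : Finset ℕ := C.erase 0 with hWdef
  have h0C : (0:ℕ) ∈ C := by simp [hCdef]
  have h0W : (0:ℕ) ∉ W := Finset.notMem_erase _ _
  refine ⟨k, k*k, ballots j t k, C, W, by omega, ?_, ?_, Finset.erase_subset _ _,
    ?_, ?_, ?_⟩
  · -- ballots ⊆ C
    intro i
    unfold ballots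
    split
    · intro x hx; simp only [Finset.mem_singleton] at hx; subst hx; exact h0C
    · rename_i hik
      apply grp_subset hkdef
      rw [Nat.div_lt_iff_lt_mul (Nat.mul_pos (by omega : 0 < j) (by omega : 0 < k - 1))]
      have hiv : (i:ℕ) < k*k := i.2
      have : t * (j*(k-1)) = k*k - k := by
        have h1 : t * (j*(k-1)) = (j*t)*(k-1) := by ring
        rw [h1, ← hkdef, Nat.mul_sub, mul_comm]
        omega
      omega
  · rw [hCdef, Finset.card_range]; omega
  · rw [hWdef, Finset.card_erase_of_mem h0C, hCdef, Finset.card_range]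
    omega
  · -- uniqueness of optimum
    intro W' hsub hcard hne
    -- W' = C.erase x for some x ≠ 0
    have hCcard : C.card = k + 1 := by rw [hCdef, Finset.card_range]
    have hsd : (C \ W').card = 1 := by
      rw [Finset.card_sdiff_of_subset hsub, hCcard, hcard]
      omega
    obtain ⟨x, hx⟩ := Finset.card_eq_one.mp hsd
    have hW'x : W' = C.erase x := by
      rw [Finset.erase_eq, ← hx, Finset.sdiff_sdiff_self_left,
        Finset.inter_eq_right.mpr hsub]
    have hxC : x ∈ C := (Finset.mem_sdiff.mp (hx ▸ Finset.mem_singleton_self x)).1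
    have hx0 : x ≠ 0 := by
      intro h
      exact hne (by rw [hW'x, h, ← hWdef])
    have hxk : 1 ≤ x ∧ x ≤ k := by
      have := Finset.mem_range.mp (hCdef ▸ hxC)
      omega
    -- the unique group containing x
    obtain ⟨g₀, hg0t, hxg0⟩ : ∃ g₀, g₀ < t ∧ x ∈ grp j g₀ := by
      refine ⟨(x-1)/j, ?_, ?_⟩
      · rw [Nat.div_lt_iff_lt_mul (by omega : 0 < j)]
        have htj : t * j = k := by rw [hkdef]; ring
        omega
      · rw [mem_grp]
        refine ⟨(x-1) % j, Nat.mod_lt _ (by omega), ?_⟩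
        have h1 := Nat.div_add_mod (x-1) j
        have h2 : j * ((x-1)/j) = ((x-1)/j) * j := mul_comm _ _
        omega
    have huniq : ∀ g, x ∈ grp j g → g = g₀ := by
      intro g hg
      rw [mem_grp] at hg hxg0
      obtain ⟨m, hm, hxm⟩ := hg
      obtain ⟨m', hm', hxm'⟩ := hxg0
      rcases Nat.lt_trichotomy g g₀ with h1|h1|h1
      · exfalso
        have : (g+1)*j ≤ g₀*j := Nat.mul_le_mul_right _ h1
        have h2 : (g+1)*j = g*j + j := by ring
        omega
      · exact h1
      · exfalso
        have : (g₀+1)*j ≤ g*j := Nat.mul_le_mul_right _ h1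
        have h2 : (g₀+1)*j = g₀*j + j := by ring
        omega
    -- intersection cardinalities
    have hWg : ∀ g < t, (W ∩ grp j g).card = j := by
      intro g hg
      have hsubW : grp j g ⊆ W := by
        intro y hy
        rw [hWdef, Finset.mem_erase]
        exact ⟨by rintro rfl; exact zero_notMem_grp hy, grp_subset hkdef hg hy⟩
      rw [Finset.inter_eq_right.mpr hsubW, grp_card]
    have hW'g : ∀ g < t, (W' ∩ grp j g).card = if g = g₀ then j-1 else j := by
      intro g hg
      rw [hW'x, Finset.erase_inter, Finset.inter_eq_right.mpr (grp_subset hkdef hg)]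
      split
      · rename_i h; subst h; rw [Finset.card_erase_of_mem hxg0, grp_card]
      · rename_i h
        rw [Finset.erase_eq_of_notMem (fun hmem => h (huniq g hmem)), grp_card]
    have hW0 : (W ∩ ({0}:Finset ℕ)).card = 0 := by
      rw [Finset.card_eq_zero, Finset.inter_singleton_of_notMem h0W]
    have hW'0 : (W' ∩ ({0}:Finset ℕ)).card = 1 := by
      have : (0:ℕ) ∈ W' := by
        rw [hW'x, Finset.mem_erase]
        exact ⟨Ne.symm hx0, h0C⟩
      rw [Finset.inter_singleton_of_mem this, Finset.card_singleton]
    -- scores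
    set r : ℕ → ℚ := fun p => ∑ m ∈ Finset.Icc 1 p, w m with hrdef
    have hr0 : r 0 = 0 := by simp [hrdef]
    have hr1 : r 1 = 1 := by simp [hrdef, hw1]
    have hrj : r j = r (j-1) + w j := by
      rw [hrdef]
      have h1 : j = (j-1) + 1 := by omega
      calc (∑ m ∈ Finset.Icc 1 j, w m) = ∑ m ∈ Finset.Icc 1 ((j-1)+1), w m := by rw [← h1]
        _ = (∑ m ∈ Finset.Icc 1 (j-1), w m) + w ((j-1)+1) :=
            Finset.sum_Icc_succ_top (by omega) _
        _ = (∑ m ∈ Finset.Icc 1 (j-1), w m) + w j := by rw [← h1]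
    set c : ℚ := ((j*(k-1) : ℕ) : ℚ) with hcdef
    have hcval : c = (j:ℚ) * ((k:ℚ) - 1) := by
      rw [hcdef]
      push_cast [Nat.cast_sub (by omega : 1 ≤ k)]
      ring
    have hscoreW : wpavScore w (ballots j t k) W = t * (c * r j) := by
      rw [score_formula w j t k hj2 ht1 hkdef, hW0]
      have : ∀ g ∈ Finset.range t, c * (∑ m ∈ Finset.Icc 1 ((W ∩ grp j g).card), w m) = c * r j := by
        intro g hg
        rw [hWg g (Finset.mem_range.mp hg)]
      rw [Finset.sum_congr rfl this, Finset.sum_const, Finset.card_range, nsmul_eq_mul]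
      simp [hr0]
    have hscoreW' : wpavScore w (ballots j t k) W'
        = k + (t * (c * r j) + (c * r (j-1) - c * r j)) := by
      rw [score_formula w j t k hj2 ht1 hkdef, hW'0]
      have step : ∀ g ∈ Finset.range t,
          c * (∑ m ∈ Finset.Icc 1 ((W' ∩ grp j g).card), w m)
          = c * r j + (if g = g₀ then c * r (j-1) - c * r j else 0) := by
        intro g hg
        rw [hW'g g (Finset.mem_range.mp hg)]
        split <;> simp [hrdef] <;> ring
      rw [Finset.sum_congr rfl step, Finset.sum_add_distrib, Finset.sum_const,
        Finset.card_range, nsmul_eq_mul,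
        Finset.sum_ite_eq' (Finset.range t) g₀ (fun _ => c * r (j-1) - c * r j),
        if_pos (Finset.mem_range.mpr hg0t)]
      simp [hr1, hw1]
    rw [hscoreW, hscoreW']
    have : c * r j - c * r (j-1) = c * w j := by rw [hrj]; ring
    have hfin : (k:ℚ) < c * w j := by rw [hcval]; exact hknum
    linarith
  · -- JR failure
    simp only [providesJR, not_not]
    have hkk : k ≤ k*k := by nlinarith
    refine ⟨(Finset.univ : Finset (Fin k)).map (Fin.castLEEmb hkk), 0, ?_, ?_, ?_⟩
    · rw [Finset.card_map, Finset.card_univ, Fintype.card_fin]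
    · intro i hi
      simp only [Finset.mem_map] at hi
      obtain ⟨i₀, _, rfl⟩ := hi
      have : ((Fin.castLEEmb hkk) i₀ : ℕ) < k := i₀.2
      unfold ballots
      rw [if_pos this]
      exact Finset.mem_singleton_self 0
    · intro i hi
      simp only [Finset.mem_map] at hi
      obtain ⟨i₀, _, rfl⟩ := hi
      have : ((Fin.castLEEmb hkk) i₀ : ℕ) < k := i₀.2
      unfold ballots
      rw [if_pos this]
      rw [Finset.singleton_inter_of_notMem h0W]
end

section
/- Strong justified representation is not always achievable: for the profile with candidates {a,b,c,d}, 4 voters with ballots {a,b}, {a,c}, {d,b}, {d,c}, and k = 2, no committee W of size 2 provides strong justified representation—for every such W and every candidate x ∉ W there exist two voters i, j with A_i ∩ A_j = {x} and x ∉ W. -/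
open Finset

/-- `W` provides strong justified representation for `(A, k)`: there is no
group of at least `n/k` voters whose common approval set is nonempty and
disjoint from `W`. -/
def providesSJR {α : Type*} [DecidableEq α] (n k : ℕ) (A : Fin n → Finset α)
    (W : Finset α) : Prop :=
  ¬ ∃ N : Finset (Fin n),
      n ≤ k * N.card ∧ (∃ c, ∀ i ∈ N, c ∈ A i) ∧
      (∀ c, (∀ i ∈ N, c ∈ A i) → c ∉ W)

/-- SJR is not always achievable.  With candidates `{a,b,c,d}`
encoded as `Fin 4` (`a = 0, b = 1, c = 2, d = 3`), 4 voters with ballots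
`{a,b}, {a,c}, {d,b}, {d,c}`, and `k = 2`, no size-2 committee provides SJR. -/
theorem sjr_not_achievable :
    ∀ W : Finset (Fin 4), W.card = 2 →
      ¬ providesSJR 4 2 (![({0, 1} : Finset (Fin 4)), {0, 2}, {3, 1}, {3, 2}]) W := by
  intro W hW
  unfold providesSJR
  rw [not_not]
  revert hW
  revert W
  decide
end
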